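/- The jump-defect admits a bound state: for α > 0, the function v(x,t) = v₀ e^{iα²t/2 − αx} on x > 0 together with u ≡ 0 on x < 0 solves the linear Schrödinger equation 2iψ_t + ψ_xx = 0 on each half-line, satisfies the jump-defect sewing conditions at x = 0, and v is square-integrable on (0,∞). -/

import Mathlib

open Complex MeasureTheory

/-!
The solution `v` is the plane wave `v₀ e^{ωt - kx}` with `ω = iα²/2` and `k = α`. A plane wave
solves `2iψ_t + ψ_xx = 0` exactly when `2iω + k² = 0`, and `|v|²` decays like `e^{-2 Re k · x}`.
Since `u ≡ 0`, both sewing conditions reduce to `(i/α) ω = -α/2`.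
-/

noncomputable def planeWave (v₀ ω k : ℂ) (x t : ℝ) : ℂ := v₀ * exp (ω * t - k * x)

section planeWave

variable (v₀ : ℂ) {ω k : ℂ}

theorem hasDerivAt_planeWave_time (x t : ℝ) :
    HasDerivAt (fun s => planeWave v₀ ω k x s) (ω * planeWave v₀ ω k x t) t := by
  have : HasDerivAt (fun s : ℂ => ω * s - k * x) ω t := by
    simpa using ((hasDerivAt_id (t : ℂ)).const_mul ω).sub_const (k * x)
  convert (this.cexp.const_mul v₀).comp_ofReal using 1 <;> simp only [planeWave]
  ring

theorem hasDerivAt_planeWave_space (x t : ℝ) :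
    HasDerivAt (fun y => planeWave v₀ ω k y t) (-k * planeWave v₀ ω k x t) x := by
  have : HasDerivAt (fun y : ℂ => ω * t - k * y) (-k) x := by
    simpa using ((hasDerivAt_id (x : ℂ)).const_mul k).const_sub (ω * t)
  convert (this.cexp.const_mul v₀).comp_ofReal using 1 <;> simp only [planeWave]
  ring

theorem deriv_planeWave_time (x t : ℝ) :
    deriv (fun s => planeWave v₀ ω k x s) t = ω * planeWave v₀ ω k x t :=
  (hasDerivAt_planeWave_time v₀ x t).deriv

theorem deriv_planeWave_space (t : ℝ) :
    deriv (fun y => planeWave v₀ ω k y t) = fun x => -k * planeWave v₀ ω k x t :=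
  funext fun x => (hasDerivAt_planeWave_space v₀ x t).deriv

theorem deriv_deriv_planeWave_space (x t : ℝ) :
    deriv (fun y => deriv (fun z => planeWave v₀ ω k z t) y) x = k ^ 2 * planeWave v₀ ω k x t := by
  rw [deriv_planeWave_space, ((hasDerivAt_planeWave_space v₀ x t).const_mul (-k)).deriv]
  ring

theorem planeWave_schrodinger (hdisp : 2 * I * ω + k ^ 2 = 0) (x t : ℝ) :
    2 * I * deriv (fun s => planeWave v₀ ω k x s) t
      + deriv (fun y => deriv (fun z => planeWave v₀ ω k z t) y) x = 0 := by
  rw [deriv_planeWave_time, deriv_deriv_planeWave_space]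
  linear_combination planeWave v₀ ω k x t * hdisp

theorem norm_planeWave_sq (x t : ℝ) :
    ‖planeWave v₀ ω k x t‖ ^ 2 = ‖planeWave v₀ ω k 0 t‖ ^ 2 * Real.exp (-(2 * k.re) * x) := by
  have hsplit : planeWave v₀ ω k x t = planeWave v₀ ω k 0 t * exp (-k * x) := by
    simp only [planeWave, ofReal_zero, mul_zero, sub_zero, mul_assoc, ← Complex.exp_add]
    ring_nf
  rw [hsplit, norm_mul, mul_pow, norm_exp, ← Real.exp_nat_mul]
  congr 2
  simp only [neg_mul, neg_re, mul_re, ofReal_re, ofReal_im, mul_zero, sub_zero]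
  ring

theorem integrableOn_norm_planeWave_sq (hk : 0 < k.re) (t : ℝ) :
    IntegrableOn (fun x => ‖planeWave v₀ ω k x t‖ ^ 2) (Set.Ioi 0) := by
  have hdecay : IntegrableOn (fun x => Real.exp (-(2 * k.re) * x)) (Set.Ioi 0) :=
    exp_neg_integrableOn_Ioi 0 (by positivity)
  exact IntegrableOn.congr_fun (hdecay.const_mul _)
    (fun x _ => (norm_planeWave_sq v₀ x t).symm) measurableSet_Ioi

end planeWave

/-- The jump-defect admits a bound state: for `α > 0`, the function
`v(x,t) = v₀ e^{iα²t/2 - αx}` on `x > 0` together with `u ≡ 0` on `x < 0` solves the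
linear Schrödinger equation `2iψ_t + ψ_xx = 0` on each half-line, satisfies the
jump-defect sewing conditions at `x = 0`, and `v` is square-integrable on `(0,∞)`. -/
theorem jump_defect_bound_state (α : ℝ) (hα : 0 < α) (v₀ : ℂ) (u v : ℝ → ℝ → ℂ)
    (hu : u = fun (_ _ : ℝ) => (0 : ℂ))
    (hv : v = fun (x t : ℝ) =>
      v₀ * Complex.exp (I * (α : ℂ) ^ 2 * (t : ℂ) / 2 - (α : ℂ) * (x : ℂ))) :
    (∀ t : ℝ, ∀ x < (0 : ℝ),
        2 * I * deriv (fun s => u x s) t + deriv (fun y => deriv (fun z => u z t) y) x = 0) ∧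
    (∀ t : ℝ, ∀ x > (0 : ℝ),
        2 * I * deriv (fun s => v x s) t + deriv (fun y => deriv (fun z => v z t) y) x = 0) ∧
    (∀ t : ℝ,
        deriv (fun y => u y t) 0
            = -(I / (α : ℂ)) * (deriv (fun s => u 0 s) t - deriv (fun s => v 0 s) t)
                + ((α : ℂ) / 2) * (u 0 t + v 0 t) ∧
        deriv (fun y => v y t) 0
            = -(I / (α : ℂ)) * (deriv (fun s => u 0 s) t - deriv (fun s => v 0 s) t)
                - ((α : ℂ) / 2) * (u 0 t + v 0 t)) ∧
    (∀ t : ℝ, IntegrableOn (fun x => ‖v x t‖ ^ 2) (Set.Ioi (0 : ℝ))) := by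
  have hv_wave : v = planeWave v₀ (I * α ^ 2 / 2) α := by
    rw [hv]; ext x t; simp only [planeWave]; ring_nf
  subst hu hv_wave
  have hdisp : 2 * I * (I * α ^ 2 / 2) + (α : ℂ) ^ 2 = 0 := by
    linear_combination (α : ℂ) ^ 2 * I_mul_I
  have hsewing : I / α * (I * α ^ 2 / 2) = -((α : ℂ) / 2) := by
    have hα0 : (α : ℂ) ≠ 0 := ofReal_ne_zero.mpr hα.ne'
    rw [div_mul_eq_mul_div, div_eq_iff hα0]
    linear_combination ((α : ℂ) ^ 2 / 2) * I_mul_I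
  refine ⟨fun t x _ => by simp, fun t x _ => planeWave_schrodinger v₀ hdisp x t,
    fun t => ⟨?_, ?_⟩, fun t => integrableOn_norm_planeWave_sq v₀ (by simpa using hα) t⟩
  · simp only [deriv_const', deriv_planeWave_time]
    linear_combination (-planeWave v₀ (I * α ^ 2 / 2) α 0 t) * hsewing
  · simp only [deriv_const', deriv_planeWave_time, deriv_planeWave_space]
    linear_combination (-planeWave v₀ (I * α ^ 2 / 2) α 0 t) * hsewing
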